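/- arXiv:1511.07244 — 3 statements merged into one kernel-verified Lean document; each statement's English description precedes it below -/
import Mathlib

section
/- Let m ∈ ℕ and B⁰₀, B⁰₁, B¹₀, B¹₁, y, Y, Δ, x_r as in the solution formula of the second-order Dirichlet-to-Neumann system, and define X_r = (1/Δ)[ Σ_{j,k=0}^m (B⁰₀(j)B¹₁(k) − B¹₀(k)B⁰₁(j)) · L_Y(k,r) − (1/2) Σ_{j,k=0}^m (B⁰₀(j)B⁰₁(k) − B⁰₀(k)B⁰₁(j)) · L_y(j,k) ]. Then Σ_{r=0}^m (B⁰₀(r)x_r + B¹₀(r)X_r) = 0 and Σ_{r=0}^m (B⁰₁(r)x_r + B¹₁(r)X_r) = 0. -/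
/-!
With `prefixSum z n = z₀ + ⋯ + zₙ` one has `Lfun z a b = prefixSum z b - prefixSum z a`, so every
double sum in the solution formulas factors into products of single sums. Hence
`x r = prefixSum y r + α` and `X r = prefixSum Y r + β` with constants `α, β`, and these are
Cramer's solution of the `2 × 2` system with matrix `(Σ B⁰ᵢ, Σ B¹ᵢ)ᵢ` (determinant `Δ`) and
right-hand side `-(Σ_r B⁰ᵢ(r) prefixSum y r + Σ_r B¹ᵢ(r) prefixSum Y r)ᵢ`. The two equations of
that system are the claim.
-/

/-- sgn(a,b) = 1 if a < b, 0 if a = b, −1 if a > b. -/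
def sgnCmp (a b : ℕ) : ℤ := if a < b then 1 else if a = b then 0 else -1

/-- L_z(a,b) = sgn(a,b) · Σ_{l=min(a,b)+1}^{max(a,b)} z_l. -/
noncomputable def Lfun (z : ℕ → ℂ) (a b : ℕ) : ℂ :=
  ((sgnCmp a b : ℤ) : ℂ) * ∑ l ∈ Finset.Ioc (min a b) (max a b), z l

open Finset

section DoubleSums

variable {ι R : Type*} [CommRing R] (s : Finset ι) (a b c d h : ι → R)

theorem sum_sum_mul_sub_mul :
    ∑ j ∈ s, ∑ k ∈ s, (a j * b k - c k * d j) =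
      (∑ j ∈ s, a j) * (∑ k ∈ s, b k) - (∑ k ∈ s, c k) * (∑ j ∈ s, d j) := by
  simp only [sum_sub_distrib]
  rw [sum_mul_sum, sum_mul_sum, sum_comm (s := s) (t := s) (f := fun j k => c k * d j)]

theorem sum_sum_mul_sub_mul_mul_left :
    ∑ j ∈ s, ∑ k ∈ s, (a j * b k - c k * d j) * h j =
      (∑ j ∈ s, a j * h j) * (∑ k ∈ s, b k) - (∑ k ∈ s, c k) * (∑ j ∈ s, d j * h j) := by
  rw [← sum_sum_mul_sub_mul]
  refine sum_congr rfl fun j _ => sum_congr rfl fun k _ => by ring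

theorem sum_sum_mul_sub_mul_mul_right :
    ∑ j ∈ s, ∑ k ∈ s, (a j * b k - c k * d j) * h k =
      (∑ j ∈ s, a j) * (∑ k ∈ s, b k * h k) - (∑ k ∈ s, c k * h k) * (∑ j ∈ s, d j) := by
  rw [← sum_sum_mul_sub_mul]
  refine sum_congr rfl fun j _ => sum_congr rfl fun k _ => by ring

end DoubleSums

def prefixSum (z : ℕ → ℂ) (n : ℕ) : ℂ := ∑ l ∈ range (n + 1), z l

theorem Lfun_eq_prefixSum_sub (z : ℕ → ℂ) (a b : ℕ) :
    Lfun z a b = prefixSum z b - prefixSum z a := by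
  rcases lt_trichotomy a b with h | rfl | h
  · simp [Lfun, sgnCmp, h, h.le, prefixSum, ← Ico_add_one_add_one_eq_Ioc, sum_Ico_eq_sub]
  · simp [Lfun, sgnCmp]
  · simp [Lfun, sgnCmp, h.le, h.not_gt, h.ne', prefixSum, ← Ico_add_one_add_one_eq_Ioc,
      sum_Ico_eq_sub]

section Lfun

variable (s : Finset ℕ) (a b c d z : ℕ → ℂ)

theorem sum_sum_mul_sub_mul_mul_Lfun_left (r : ℕ) :
    ∑ j ∈ s, ∑ k ∈ s, (a j * b k - c k * d j) * Lfun z j r =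
      ((∑ j ∈ s, a j) * (∑ k ∈ s, b k) - (∑ k ∈ s, c k) * (∑ j ∈ s, d j)) * prefixSum z r
        - ((∑ j ∈ s, a j * prefixSum z j) * (∑ k ∈ s, b k)
          - (∑ k ∈ s, c k) * (∑ j ∈ s, d j * prefixSum z j)) := by
  simp only [Lfun_eq_prefixSum_sub, mul_sub, sum_sub_distrib, sum_sum_mul_sub_mul_mul_left]
  simp only [← sum_mul]
  ring

theorem sum_sum_mul_sub_mul_mul_Lfun_right (r : ℕ) :
    ∑ j ∈ s, ∑ k ∈ s, (a j * b k - c k * d j) * Lfun z k r =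
      ((∑ j ∈ s, a j) * (∑ k ∈ s, b k) - (∑ k ∈ s, c k) * (∑ j ∈ s, d j)) * prefixSum z r
        - ((∑ j ∈ s, a j) * (∑ k ∈ s, b k * prefixSum z k)
          - (∑ k ∈ s, c k * prefixSum z k) * (∑ j ∈ s, d j)) := by
  simp only [Lfun_eq_prefixSum_sub, mul_sub, sum_sub_distrib, sum_sum_mul_sub_mul_mul_right]
  simp only [← sum_mul]
  ring

theorem sum_sum_mul_sub_mul_mul_Lfun :
    ∑ j ∈ s, ∑ k ∈ s, (a j * b k - a k * b j) * Lfun z j k =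
      2 * ((∑ j ∈ s, a j) * (∑ k ∈ s, b k * prefixSum z k)
        - (∑ j ∈ s, a j * prefixSum z j) * (∑ k ∈ s, b k)) := by
  simp only [Lfun_eq_prefixSum_sub, mul_sub, sum_sub_distrib,
    sum_sum_mul_sub_mul_mul_left, sum_sum_mul_sub_mul_mul_right]
  ring

end Lfun

theorem sum_mul_add_mul_eq_of_eq_add {ι R : Type*} [CommRing R] {s : Finset ι}
    {x X P Q : ι → R} {α β : R} (hx : ∀ r ∈ s, x r = P r + α) (hX : ∀ r ∈ s, X r = Q r + β)
    (b c : ι → R) :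
    ∑ r ∈ s, (b r * x r + c r * X r) =
      ∑ r ∈ s, b r * P r + ∑ r ∈ s, c r * Q r + (∑ r ∈ s, b r) * α + (∑ r ∈ s, c r) * β := by
  rw [sum_congr rfl fun r hr => by rw [hx r hr, hX r hr]]
  simp only [mul_add, sum_add_distrib, ← sum_mul]
  ring

/-- Lemma (a), n = 2 case: the solution formulas for x_r, X_r satisfy the
two homogeneous multipoint-condition equations. -/
theorem stmt8 (m : ℕ) (B00 B01 B10 B11 : ℕ → ℂ) (y Y : ℕ → ℂ) (Δ : ℂ)
    (hΔdef : Δ = ∑ j ∈ Finset.range (m + 1), ∑ k ∈ Finset.range (m + 1),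
      (B00 j * B11 k - B10 k * B01 j))
    (hΔ : Δ ≠ 0)
    (x X : ℕ → ℂ)
    (hx : ∀ r, r ≤ m → x r = (1 / Δ) *
      ((∑ j ∈ Finset.range (m + 1), ∑ k ∈ Finset.range (m + 1),
          (B00 j * B11 k - B10 k * B01 j) * Lfun y j r)
        + (1 / 2) * ∑ j ∈ Finset.range (m + 1), ∑ k ∈ Finset.range (m + 1),
          (B10 j * B11 k - B10 k * B11 j) * Lfun Y j k))
    (hX : ∀ r, r ≤ m → X r = (1 / Δ) *
      ((∑ j ∈ Finset.range (m + 1), ∑ k ∈ Finset.range (m + 1),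
          (B00 j * B11 k - B10 k * B01 j) * Lfun Y k r)
        - (1 / 2) * ∑ j ∈ Finset.range (m + 1), ∑ k ∈ Finset.range (m + 1),
          (B00 j * B01 k - B00 k * B01 j) * Lfun y j k)) :
    (∑ r ∈ Finset.range (m + 1), (B00 r * x r + B10 r * X r)) = 0 ∧
    (∑ r ∈ Finset.range (m + 1), (B01 r * x r + B11 r * X r)) = 0 := by
  set R := range (m + 1)
  have hdet : Δ = (∑ j ∈ R, B00 j) * (∑ k ∈ R, B11 k) - (∑ k ∈ R, B10 k) * (∑ j ∈ R, B01 j) :=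
    hΔdef.trans (sum_sum_mul_sub_mul ..)
  set w₀ := ∑ r ∈ R, B00 r * prefixSum y r + ∑ r ∈ R, B10 r * prefixSum Y r
  set w₁ := ∑ r ∈ R, B01 r * prefixSum y r + ∑ r ∈ R, B11 r * prefixSum Y r
  have hxr : ∀ r ∈ R,
      x r = prefixSum y r + ((∑ k ∈ R, B10 k) * w₁ - (∑ k ∈ R, B11 k) * w₀) / Δ := by
    intro r hr
    rw [hx r (mem_range_succ_iff.mp hr), sum_sum_mul_sub_mul_mul_Lfun_left,
      sum_sum_mul_sub_mul_mul_Lfun, ← hdet]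
    field_simp
    ring
  have hXr : ∀ r ∈ R,
      X r = prefixSum Y r + ((∑ j ∈ R, B01 j) * w₀ - (∑ j ∈ R, B00 j) * w₁) / Δ := by
    intro r hr
    rw [hX r (mem_range_succ_iff.mp hr), sum_sum_mul_sub_mul_mul_Lfun_right,
      sum_sum_mul_sub_mul_mul_Lfun, ← hdet]
    field_simp
    ring
  rw [sum_mul_add_mul_eq_of_eq_add hxr hXr, sum_mul_add_mul_eq_of_eq_add hxr hXr]
  constructor <;> field_simp <;> rw [hdet] <;> ring
end

section
/- Suppose q : [0,1] × [0,T] → ℂ is C² in x, continuous in t, satisfies q_t = q_xx on (0,1)×(0,T), and satisfies ∫_{1/2}^1 (1−x) q(x,t) dx = 0 for all t. Then (1/2)∂_x q(1/2,t) − q(1,t) + q(1/2,t) = 0 for all t ∈ (0,T). -/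
/-- For a solution of the heat equation, the nonlocal condition
∫_{1/2}^1 (1−x) q(x,t) dx = 0 implies the multipoint condition
(1/2)∂_x q(1/2,t) − q(1,t) + q(1/2,t) = 0. -/
theorem stmt14 (T : ℝ) (hT : 0 < T) (q qx qxx qt : ℝ → ℝ → ℂ)
    (hqx : ∀ t ∈ Set.Ioo (0 : ℝ) T, ∀ x ∈ Set.Icc (0 : ℝ) 1,
      HasDerivAt (fun x' => q x' t) (qx x t) x)
    (hqxx : ∀ t ∈ Set.Ioo (0 : ℝ) T, ∀ x ∈ Set.Icc (0 : ℝ) 1,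
      HasDerivAt (fun x' => qx x' t) (qxx x t) x)
    (hqt : ∀ x ∈ Set.Icc (0 : ℝ) 1, ∀ t ∈ Set.Ioo (0 : ℝ) T,
      HasDerivAt (fun t' => q x t') (qt x t) t)
    (hcont : ∀ t ∈ Set.Ioo (0 : ℝ) T,
      ContinuousOn (fun x => qxx x t) (Set.Icc (0 : ℝ) 1))
    (heat : ∀ x ∈ Set.Ioo (0 : ℝ) 1, ∀ t ∈ Set.Ioo (0 : ℝ) T, qt x t = qxx x t)
    (hdiff : ∀ t ∈ Set.Ioo (0 : ℝ) T,
      HasDerivAt (fun t' => ∫ x in (1 / 2 : ℝ)..1, ((1 - x : ℝ) : ℂ) * q x t')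
        (∫ x in (1 / 2 : ℝ)..1, ((1 - x : ℝ) : ℂ) * qt x t) t)
    (hnl : ∀ t ∈ Set.Icc (0 : ℝ) T,
      (∫ x in (1 / 2 : ℝ)..1, ((1 - x : ℝ) : ℂ) * q x t) = 0) :
    ∀ t ∈ Set.Ioo (0 : ℝ) T,
      (1 / 2 : ℂ) * qx (1 / 2) t - q 1 t + q (1 / 2) t = 0 := by
  intro t ht
  -- subset inclusion
  have hsub : Set.uIcc (1/2 : ℝ) 1 ⊆ Set.Icc (0:ℝ) 1 := by
    rw [Set.uIcc_of_le (by norm_num)]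
    exact Set.Icc_subset_Icc (by norm_num) le_rfl
  -- Step 1: derivative of the nonlocal integral is 0
  have hF0 : (fun t' => ∫ x in (1/2 : ℝ)..1, ((1 - x : ℝ) : ℂ) * q x t')
      =ᶠ[nhds t] (fun _ => (0:ℂ)) := by
    filter_upwards [Ioo_mem_nhds ht.1 ht.2] with s hs
    exact hnl s ⟨le_of_lt hs.1, le_of_lt hs.2⟩
  have hD0 : (∫ x in (1/2 : ℝ)..1, ((1 - x : ℝ) : ℂ) * qt x t) = 0 := by
    have h1 : HasDerivAt (fun _ : ℝ => (0:ℂ))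
        (∫ x in (1/2 : ℝ)..1, ((1 - x : ℝ) : ℂ) * qt x t) t :=
      (hdiff t ht).congr_of_eventuallyEq hF0.symm
    exact h1.unique (hasDerivAt_const t 0)
  -- Step 2: replace qt by qxx a.e.
  have hI : (∫ x in (1/2 : ℝ)..1, ((1 - x : ℝ) : ℂ) * qxx x t) = 0 := by
    rw [← hD0]
    apply intervalIntegral.integral_congr_ae
    have : ∀ᵐ x : ℝ, x ≠ 1 := by
      refine MeasureTheory.ae_iff.mpr ?_
      have h1 : {x : ℝ | ¬ x ≠ 1} = {1} := by ext y; simp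
      rw [h1]
      exact MeasureTheory.measure_singleton (1:ℝ)
    filter_upwards [this] with x hx1 hx
    rw [Set.uIoc_of_le (by norm_num : (1/2:ℝ) ≤ 1)] at hx
    rw [heat x ⟨lt_trans (by norm_num) hx.1, lt_of_le_of_ne hx.2 hx1⟩ t ht]
  -- continuity / integrability facts
  have hqxcont : ContinuousOn (fun x => qx x t) (Set.Icc (0:ℝ) 1) :=
    fun x hx => ((hqxx t ht x hx).continuousAt).continuousWithinAt
  have hqxint : IntervalIntegrable (fun x => qx x t) MeasureTheory.volume (1/2) 1 :=
    (hqxcont.mono hsub).intervalIntegrable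
  have hqxxint : IntervalIntegrable (fun x => qxx x t) MeasureTheory.volume (1/2) 1 :=
    ((hcont t ht).mono hsub).intervalIntegrable
  -- Step 3: integration by parts
  have parts : (∫ x in (1/2 : ℝ)..1, ((1 - x : ℝ) : ℂ) * qxx x t)
      = ((1 - 1 : ℝ) : ℂ) * qx 1 t - ((1 - 1/2 : ℝ) : ℂ) * qx (1/2) t
        - ∫ x in (1/2 : ℝ)..1, (-1 : ℂ) * qx x t := by
    apply intervalIntegral.integral_mul_deriv_eq_deriv_mul
      (u := fun x : ℝ => ((1 - x : ℝ) : ℂ)) (u' := fun _ => (-1 : ℂ))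
      (v := fun x => qx x t) (v' := fun x => qxx x t)
    · intro x hx
      have : HasDerivAt (fun x : ℝ => ((1 - x : ℝ) : ℂ)) (-1) x := by
        have := ((hasDerivAt_id x).const_sub (1:ℝ)).ofReal_comp
        simpa using this
      exact this
    · intro x hx
      exact hqxx t ht x (hsub hx)
    · exact intervalIntegrable_const
    · exact hqxxint
  have ftc : (∫ x in (1/2 : ℝ)..1, qx x t) = q 1 t - q (1/2) t := by
    apply intervalIntegral.integral_eq_sub_of_hasDerivAt (f := fun x => q x t) (f' := fun x => qx x t)
    · intro x hx
      exact hqx t ht x (hsub hx)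
    · exact hqxint
  rw [hI] at parts
  rw [intervalIntegral.integral_const_mul, ftc] at parts
  push_cast at parts
  ring_nf at parts ⊢
  linear_combination parts
end

section
/- For the third-order 3-point example (m = 2, η₁ = 1/2, multipoint conditions q(0,t) − c q(1/2,t) = 0, q(1,t) = 0, q_x(1,t) = 0), the determinant of the Dirichlet-to-Neumann system is Δ(λ) = ((α² − α)/(27 i λ⁵)) Σ_{k=0}^{2} α^k ( e^{−i α^k λ} − c e^{−i α^k λ / 2} ), where α = e^{2πi/3}. In particular, Δ(λ) = 0 (for λ ≠ 0) if and only if Σ_{k=0}^2 α^k (e^{−iα^kλ} − c e^{−iα^kλ/2}) = 0. -/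
/-!
The determinant is multilinear in its rows, so the sum of the `27` determinants is the
determinant of the row sums `Mₛₖ = Σᵣ Bˢₖ(r)`. Writing `xₛ = e^{iαˢλ/2}`, the three columns of `M`
carry the factors `-1/(3λ²)`, `-1/(3λ²)`, `1/(3iλ)`, and what is left has rows
`(αˢ(1 - c xₛ), αˢ xₛ², α²ˢ xₛ²)`. Since `1 + α + α² = 0` we have `x₀x₁x₂ = 1`, so the cofactor
of the first-column entry in row `s` is `(α² - α) xₛ⁻²`, and `xₛ⁻² = e^{-iαˢλ}`,
`xₛ⁻¹ = e^{-iαˢλ/2}`. As `α² - α ≠ 0`, `Δ(λ)` vanishes exactly when the sum does.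
-/

open Complex Matrix Finset

theorem Matrix.det_fin_three_of_sum {R ι : Type*} [CommRing R] [Fintype ι]
    (f : Fin 3 → Fin 3 → ι → R) :
    det (of fun i k => ∑ r, f i k r) = ∑ j0, ∑ j1, ∑ j2,
      det !![f 0 0 j0, f 0 1 j0, f 0 2 j0; f 1 0 j1, f 1 1 j1, f 1 2 j1;
        f 2 0 j2, f 2 1 j2, f 2 2 j2] := by
  simp only [det_fin_three, of_apply, cons_val', cons_val_zero, cons_val_one, cons_val_two,
    empty_val', cons_val_fin_one, head_cons, tail_cons, head_fin_const, sum_add_distrib,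
    sum_sub_distrib, ← mul_sum, ← sum_mul]

def reducedDtnMatrix {K : Type*} [Field K] (ω c : K) (x : ℕ → K) :
    Matrix (Fin 3) (Fin 3) K :=
  of fun s k =>
    ![ω ^ (s : ℕ) * (1 - c * x s), ω ^ (s : ℕ) * x s ^ 2, ω ^ (2 * (s : ℕ)) * x s ^ 2] k

theorem det_reducedDtnMatrix {K : Type*} [Field K] {ω : K} (hω : ω ^ 3 = 1)
    (c : K) (x : ℕ → K) (hx : x 0 * x 1 * x 2 = 1) :
    det (reducedDtnMatrix ω c x) =
      (ω ^ 2 - ω) * ∑ s ∈ range 3, ω ^ s * ((x s)⁻¹ ^ 2 - c * (x s)⁻¹) := by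
  have hx0 : (x 0)⁻¹ = x 1 * x 2 := inv_eq_of_mul_eq_one_right (by linear_combination hx)
  have hx1 : (x 1)⁻¹ = x 0 * x 2 := inv_eq_of_mul_eq_one_right (by linear_combination hx)
  have hx2 : (x 2)⁻¹ = x 0 * x 1 := inv_eq_of_mul_eq_one_right (by linear_combination hx)
  have hω4 : ω ^ 4 = ω := by linear_combination ω * hω
  simp only [reducedDtnMatrix, det_fin_three, of_apply, cons_val_zero, cons_val_one,
    cons_val_two, head_cons, tail_cons, Fin.val_zero, Fin.val_one, Fin.val_two, sum_range_succ,
    sum_range_zero, hx0, hx1, hx2, pow_zero, pow_one, one_mul, zero_add, Nat.reduceMul, hω4]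
  linear_combination -ω * (1 - c * x 0) * x 1 ^ 2 * x 2 ^ 2 * hω
    - c * ((ω ^ 2 - ω) * x 1 * x 2 + (ω ^ 3 - ω ^ 2) * x 0 * x 2
      + ω ^ 2 * (ω ^ 2 - ω) * x 0 * x 1) * hx

theorem IsPrimitiveRoot.prod_exp_pow_mul_eq_one {ω : ℂ} {n : ℕ} (h : IsPrimitiveRoot ω n)
    (hn : 1 < n) (z : ℂ) : ∏ k ∈ range n, exp (ω ^ k * z) = 1 := by
  rw [← exp_sum, ← sum_mul, h.geom_sum_eq_zero hn, zero_mul, exp_zero]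

theorem IsPrimitiveRoot.sq_sub_self_ne_zero {K : Type*} [CommRing K] [IsDomain K] {ζ : K}
    {n : ℕ} (h : IsPrimitiveRoot ζ n) (hn : 1 < n) : ζ ^ 2 - ζ ≠ 0 := by
  rw [sq, ← mul_sub_one]
  exact mul_ne_zero (h.ne_zero (by omega)) (sub_ne_zero.mpr (h.ne_one hn))

def threePointCoeff (c : ℂ) : Fin 3 → Fin 3 → Fin 3 → ℂ := fun j k r =>
  if j = 0 ∧ k = 0 ∧ r = 0 then 1
  else if j = 0 ∧ k = 0 ∧ r = 1 then -c
  else if j = 0 ∧ k = 1 ∧ r = 2 then 1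
  else if j = 1 ∧ k = 2 ∧ r = 2 then 1
  else 0

/-- The paper's `Bˢₖ(r)(λ)` for boundary coefficients `bʲₖ(r)` and nodes `ηᵣ`. -/
noncomputable def dtnEntry (α : ℂ) (b : Fin 3 → Fin 3 → Fin 3 → ℂ) (η : Fin 3 → ℝ)
    (s k r : Fin 3) (lam : ℂ) : ℂ :=
  (1 / 3) * exp (I * α ^ (s : ℕ) * lam * ((η r : ℝ) : ℂ)) *
    (-(b 0 k r) * α ^ (s : ℕ) / lam ^ 2 + (b 1 k r) * α ^ (2 * (s : ℕ)) / (I * lam) + b 2 k r)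

theorem sum_dtnEntry_threePointCoeff (α lam c : ℂ) (s k : Fin 3) :
    ∑ r, dtnEntry α (threePointCoeff c) ![0, 1 / 2, 1] s k r lam =
      ![-1 / (3 * lam ^ 2), -1 / (3 * lam ^ 2), 1 / (3 * I * lam)] k *
        reducedDtnMatrix α c (fun s => exp (α ^ s * (I * lam / 2))) s k := by
  have hhalf : exp (I * α ^ (s : ℕ) * lam / 2) = exp (α ^ (s : ℕ) * (I * lam / 2)) := by
    ring_nf
  have hsq : exp (I * α ^ (s : ℕ) * lam) = exp (α ^ (s : ℕ) * (I * lam / 2)) ^ 2 := by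
    rw [← hhalf, sq, ← exp_add, add_halves]
  fin_cases k <;>
    simp only [dtnEntry, threePointCoeff, reducedDtnMatrix, of_apply, Fin.sum_univ_three,
      Fin.isValue, Fin.reduceFinMk, Fin.reduceEq, true_and, false_and, and_false, and_self, ↓reduceIte, cons_val_zero,
      cons_val_one, cons_val_two, Nat.succ_eq_add_one, Nat.reduceAdd, tail_cons, head_cons,
      ofReal_zero, ofReal_one, ofReal_div, ofReal_ofNat, mul_zero, mul_one, exp_zero,
      mul_one_div, hhalf, hsq] <;>
    ring

/-- Third-order 3-point example: the determinant of the Dirichlet-to-Neumann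
system equals ((α²−α)/(27iλ⁵)) Σ_{k=0}^2 αᵏ(e^{−iαᵏλ} − c e^{−iαᵏλ/2}),
and vanishes (λ ≠ 0) iff that sum vanishes. -/
theorem stmt19 (c : ℂ) (α : ℂ)
    (hα : α = Complex.exp (2 * Real.pi * Complex.I / 3))
    (b : Fin 3 → Fin 3 → Fin 3 → ℂ)
    (hb : b = fun j k r =>
      if j = 0 ∧ k = 0 ∧ r = 0 then 1
      else if j = 0 ∧ k = 0 ∧ r = 1 then -c
      else if j = 0 ∧ k = 1 ∧ r = 2 then 1
      else if j = 1 ∧ k = 2 ∧ r = 2 then 1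
      else 0)
    (η : Fin 3 → ℝ) (hη : η = ![0, 1 / 2, 1])
    (B : Fin 3 → Fin 3 → Fin 3 → ℂ → ℂ)
    (hB : ∀ (s k r : Fin 3) (lam : ℂ), B s k r lam =
      (1 / 3) * Complex.exp (Complex.I * α ^ (s : ℕ) * lam * ((η r : ℝ) : ℂ)) *
        (-(b 0 k r) * α ^ (s : ℕ) / lam ^ 2
          + (b 1 k r) * α ^ (2 * (s : ℕ)) / (Complex.I * lam)
          + b 2 k r))
    (Δ : ℂ → ℂ)
    (hΔ : ∀ lam, Δ lam = ∑ j0 : Fin 3, ∑ j1 : Fin 3, ∑ j2 : Fin 3,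
      Matrix.det !![B 0 0 j0 lam, B 0 1 j0 lam, B 0 2 j0 lam;
                    B 1 0 j1 lam, B 1 1 j1 lam, B 1 2 j1 lam;
                    B 2 0 j2 lam, B 2 1 j2 lam, B 2 2 j2 lam]) :
    ∀ lam : ℂ, lam ≠ 0 →
      (Δ lam = ((α ^ 2 - α) / (27 * Complex.I * lam ^ 5)) *
        ∑ k ∈ Finset.range 3, α ^ k *
          (Complex.exp (-Complex.I * α ^ k * lam)
            - c * Complex.exp (-Complex.I * α ^ k * lam / 2)))
      ∧ (Δ lam = 0 ↔
        (∑ k ∈ Finset.range 3, α ^ k *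
          (Complex.exp (-Complex.I * α ^ k * lam)
            - c * Complex.exp (-Complex.I * α ^ k * lam / 2))) = 0) := by
  intro lam hlam
  have hα3 : IsPrimitiveRoot α 3 := by
    rw [hα]; exact_mod_cast isPrimitiveRoot_exp 3 (by norm_num)
  have hB' : B = dtnEntry α (threePointCoeff c) ![0, 1 / 2, 1] := by
    subst hb hη; funext s k r lam; exact hB s k r lam
  have hE3 : exp (α ^ 0 * (I * lam / 2)) * exp (α ^ 1 * (I * lam / 2))
      * exp (α ^ 2 * (I * lam / 2)) = 1 := by
    simpa only [prod_range_succ, prod_range_zero, one_mul]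
      using hα3.prod_exp_pow_mul_eq_one (by norm_num) (I * lam / 2)
  have hsum : ∑ k ∈ range 3, α ^ k * (exp (-I * α ^ k * lam) - c * exp (-I * α ^ k * lam / 2))
      = ∑ s ∈ range 3, α ^ s *
        ((exp (α ^ s * (I * lam / 2)))⁻¹ ^ 2 - c * (exp (α ^ s * (I * lam / 2)))⁻¹) := by
    refine sum_congr rfl fun k _ => ?_
    rw [← Complex.exp_neg, sq, ← exp_add]
    ring_nf
  have hformula : Δ lam = ((α ^ 2 - α) / (27 * I * lam ^ 5)) * ∑ k ∈ range 3, α ^ k *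
      (exp (-I * α ^ k * lam) - c * exp (-I * α ^ k * lam / 2)) := by
    rw [hΔ, ← det_fin_three_of_sum fun s k r => B s k r lam, hB']
    simp_rw [sum_dtnEntry_threePointCoeff]
    rw [det_mul_row, det_reducedDtnMatrix hα3.pow_eq_one c _ hE3, hsum, Fin.prod_univ_three]
    simp only [cons_val_zero, cons_val_one, cons_val_two, head_cons, tail_cons]
    ring
  refine ⟨hformula, ?_⟩
  have hfac : (α ^ 2 - α) / (27 * I * lam ^ 5) ≠ 0 :=
    div_ne_zero (hα3.sq_sub_self_ne_zero (by norm_num)) (by simp [hlam, I_ne_zero])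
  rw [hformula, mul_eq_zero, or_iff_right hfac]
end
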